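/- For every n ∈ ℕ there exists a constant C = C(n) > 0 such that the following holds. Let S ⊂ ℝ^d with n < d, let x ∈ S and r > 0, and suppose α(x,r) < 1/8. Then β(x,r) ≤ 100·C·√(b̃(x,r)). -/

import Mathlib

/-!
Take an `n`-plane `Γ` through `x` that is `r/8`-close to `S ∩ B_r(x)` in Hausdorff distance.
It gives `β ≤ 1/8`, and greedily it gives points `p₁, …, pₙ` of `S ∩ B_r(x)` such that each
`pₖ - x` has a component `≥ r/2` along a unit vector of `Γ` orthogonal to the earlier `pᵢ - x`.
This triangular structure makes the family well conditioned: every combination `∑ μᵢ (pᵢ - x)`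
has norm `≳ 3⁻ⁿ r ∑ |μᵢ|`. By polarization, a `δ`-isometry `f` into `B_r^n` changes the inner
products `⟪a - x, b - x⟫` by `O(δ r)`. When `δ ≪ r`, the images `f pᵢ - f x` therefore form a
basis of `ℝⁿ`. Writing `f y - f x` in this basis puts `y - x` within `O(√(δ r))` of
`span (pᵢ - x)`, so `β² ≲ δ / r`. When `δ` is not small, `β ≤ 1/8` is enough.
-/

open Metric Set

noncomputable section

/-- Gromov–Hausdorff distance via metrics on the disjoint union. -/
def ghDist (X Y : Type) [MetricSpace X] [MetricSpace Y] : ℝ :=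
  sInf {r : ℝ | ∃ M : MetricSpace (X ⊕ Y),
    (∀ a b : X, @dist _ M.toPseudoMetricSpace.toDist (Sum.inl a) (Sum.inl b) = dist a b) ∧
    (∀ a b : Y, @dist _ M.toPseudoMetricSpace.toDist (Sum.inr a) (Sum.inr b) = dist a b) ∧
    @Metric.hausdorffDist _ M.toPseudoMetricSpace (Set.range Sum.inl) (Set.range Sum.inr) ≤ r}

def planeHD {d : ℕ} (S : Set (EuclideanSpace ℝ (Fin d)))
    (Γ : AffineSubspace ℝ (EuclideanSpace ℝ (Fin d)))
    (x : EuclideanSpace ℝ (Fin d)) (r : ℝ) : ℝ :=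
  r⁻¹ * Metric.hausdorffDist (S ∩ Metric.ball x r)
    ((Γ : Set (EuclideanSpace ℝ (Fin d))) ∩ Metric.ball x r)

def planeSup {d : ℕ} (S : Set (EuclideanSpace ℝ (Fin d)))
    (Γ : AffineSubspace ℝ (EuclideanSpace ℝ (Fin d)))
    (x : EuclideanSpace ℝ (Fin d)) (r : ℝ) : ℝ :=
  r⁻¹ * sSup ((fun y => Metric.infDist y (Γ : Set (EuclideanSpace ℝ (Fin d)))) ''
    (S ∩ Metric.ball x r))

def alphaNum (n : ℕ) {d : ℕ} (S : Set (EuclideanSpace ℝ (Fin d)))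
    (x : EuclideanSpace ℝ (Fin d)) (r : ℝ) : ℝ :=
  sInf {t : ℝ | ∃ Γ : AffineSubspace ℝ (EuclideanSpace ℝ (Fin d)),
    x ∈ Γ ∧ Module.finrank ℝ Γ.direction = n ∧ t = planeHD S Γ x r}

def betaNum (n : ℕ) {d : ℕ} (S : Set (EuclideanSpace ℝ (Fin d)))
    (x : EuclideanSpace ℝ (Fin d)) (r : ℝ) : ℝ :=
  sInf {t : ℝ | ∃ Γ : AffineSubspace ℝ (EuclideanSpace ℝ (Fin d)),
    x ∈ Γ ∧ Module.finrank ℝ Γ.direction = n ∧ t = planeSup S Γ x r}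

def aTilde (n : ℕ) {d : ℕ} (S : Set (EuclideanSpace ℝ (Fin d)))
    (x : EuclideanSpace ℝ (Fin d)) (r : ℝ) : ℝ :=
  r⁻¹ * ghDist (↥(S ∩ Metric.ball x r)) (↥(Metric.ball (0 : EuclideanSpace ℝ (Fin n)) r))

def bTilde (n : ℕ) {d : ℕ} (S : Set (EuclideanSpace ℝ (Fin d)))
    (x : EuclideanSpace ℝ (Fin d)) (r : ℝ) : ℝ :=
  r⁻¹ * sInf {δ : ℝ | 0 < δ ∧
    ∃ f : ↥(S ∩ Metric.ball x r) → ↥(Metric.ball (0 : EuclideanSpace ℝ (Fin n)) r),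
      ∀ a b, |dist (f a) (f b) - dist a b| < δ}

def alphaSeq (n : ℕ) {d : ℕ} (S : Set (EuclideanSpace ℝ (Fin d))) (i : ℤ) : ℝ :=
  sSup ((fun x => alphaNum n S x ((2 : ℝ) ^ (-i))) '' (S ∩ Metric.ball 0 1))

def betaSeq (n : ℕ) {d : ℕ} (S : Set (EuclideanSpace ℝ (Fin d))) (i : ℤ) : ℝ :=
  sSup ((fun x => betaNum n S x ((2 : ℝ) ^ (-i))) '' (S ∩ Metric.ball 0 1))

def aTildeSeq (n : ℕ) {d : ℕ} (S : Set (EuclideanSpace ℝ (Fin d))) (ε : ℝ) (i : ℤ) : ℝ :=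
  sSup ((fun x => aTilde n S x ((2 : ℝ) ^ (-i))) '' (S ∩ Metric.ball 0 (1 - ε)))

def bTildeSeq (n : ℕ) {d : ℕ} (S : Set (EuclideanSpace ℝ (Fin d))) (ε : ℝ) (i : ℤ) : ℝ :=
  sSup ((fun x => bTilde n S x ((2 : ℝ) ^ (-i))) '' (S ∩ Metric.ball 0 (1 - ε)))

def planeDist {d : ℕ} (Γ₁ Γ₂ : AffineSubspace ℝ (EuclideanSpace ℝ (Fin d))) : ℝ :=
  Metric.hausdorffDist
    ((Γ₁.direction : Set (EuclideanSpace ℝ (Fin d))) ∩ Metric.closedBall 0 1)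
    ((Γ₂.direction : Set (EuclideanSpace ℝ (Fin d))) ∩ Metric.closedBall 0 1)

def simplexVol (n : ℕ) {d : ℕ} (p : Fin (n + 1) → EuclideanSpace ℝ (Fin d)) : ℝ :=
  Real.sqrt (Matrix.det (Matrix.of fun i j : Fin n =>
    (inner ℝ (p i.succ - p 0) (p j.succ - p 0) : ℝ))) / (n.factorial : ℝ)

def IsRealizingPlane (n : ℕ) {d : ℕ} (C' : ℝ) (S : Set (EuclideanSpace ℝ (Fin d)))
    (Γ : AffineSubspace ℝ (EuclideanSpace ℝ (Fin d))) (x : EuclideanSpace ℝ (Fin d))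
    (r : ℝ) : Prop :=
  x ∈ Γ ∧ Module.finrank ℝ Γ.direction = n ∧ planeSup S Γ x r = betaNum n S x r ∧
    planeHD S Γ x r ≤ C' * alphaNum n S x r

open Module Finset
open scoped RealInnerProductSpace

lemma norm_sub_le_two_mul_of_mem_ball {G : Type*} [SeminormedAddCommGroup G] {a b x : G} {r : ℝ}
    (ha : a ∈ ball x r) (hb : b ∈ ball x r) : ‖a - b‖ ≤ 2 * r := by
  rw [← dist_eq_norm]
  linarith [dist_triangle_right a b x, mem_ball.mp ha, mem_ball.mp hb]

lemma hausdorffEDist_inter_ball_ne_top {X : Type*} [PseudoMetricSpace X] {s t : Set X} {x : X}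
    {r : ℝ} (hr : 0 < r) (hs : x ∈ s) (ht : x ∈ t) :
    hausdorffEDist (s ∩ ball x r) (t ∩ ball x r) ≠ ⊤ :=
  hausdorffEDist_ne_top_of_nonempty_of_bounded ⟨x, hs, mem_ball_self hr⟩
    ⟨x, ht, mem_ball_self hr⟩ (isBounded_ball.subset inter_subset_right)
    (isBounded_ball.subset inter_subset_right)

section InnerProductSpace

variable {E F : Type*} [NormedAddCommGroup E] [InnerProductSpace ℝ E]
  [NormedAddCommGroup F] [InnerProductSpace ℝ F]

lemma abs_sq_sub_sq_le_of_abs_sub_le {p q δ r : ℝ} (hp : 0 ≤ p) (hq : 0 ≤ q) (hpr : p ≤ 2 * r)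
    (hqr : q ≤ 2 * r) (h : |p - q| ≤ δ) : |p ^ 2 - q ^ 2| ≤ 4 * δ * r := by
  rw [show p ^ 2 - q ^ 2 = (p - q) * (p + q) by ring, abs_mul, abs_of_nonneg (add_nonneg hp hq)]
  nlinarith [abs_nonneg (p - q)]

/-- Polarization: `2 ⟪a - c, b - c⟫ = ‖a - c‖² + ‖b - c‖² - ‖a - b‖²`. -/
lemma abs_inner_sub_inner_le_of_abs_norm_sub_le {a b c : E} {a' b' c' : F} {δ r : ℝ}
    (hab : ‖a - b‖ ≤ 2 * r) (hac : ‖a - c‖ ≤ 2 * r) (hbc : ‖b - c‖ ≤ 2 * r)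
    (hab' : ‖a' - b'‖ ≤ 2 * r) (hac' : ‖a' - c'‖ ≤ 2 * r) (hbc' : ‖b' - c'‖ ≤ 2 * r)
    (h₁ : |‖a - b‖ - ‖a' - b'‖| ≤ δ) (h₂ : |‖a - c‖ - ‖a' - c'‖| ≤ δ)
    (h₃ : |‖b - c‖ - ‖b' - c'‖| ≤ δ) :
    |⟪a - c, b - c⟫ - ⟪a' - c', b' - c'⟫| ≤ 6 * δ * r := by
  have polar := norm_sub_sq_real (a - c) (b - c)
  have polar' := norm_sub_sq_real (a' - c') (b' - c')
  rw [sub_sub_sub_cancel_right] at polar polar'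
  have d₁ := abs_le.mp <| abs_sq_sub_sq_le_of_abs_sub_le (norm_nonneg _) (norm_nonneg _) hab hab' h₁
  have d₂ := abs_le.mp <| abs_sq_sub_sq_le_of_abs_sub_le (norm_nonneg _) (norm_nonneg _) hac hac' h₂
  have d₃ := abs_le.mp <| abs_sq_sub_sq_le_of_abs_sub_le (norm_nonneg _) (norm_nonneg _) hbc hbc' h₃
  rw [abs_le]
  constructor <;> linarith

lemma norm_sum_smul_sq {ι : Type*} [Fintype ι] (v : ι → E) (μ : ι → ℝ) :
    ‖∑ i, μ i • v i‖ ^ 2 = ∑ i, ∑ j, μ i * μ j * ⟪v i, v j⟫ := by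
  simp only [← real_inner_self_eq_norm_sq, sum_inner, inner_sum, real_inner_smul_left,
    real_inner_smul_right]
  exact sum_congr rfl fun _ _ => sum_congr rfl fun _ _ => by rw [real_inner_comm]; ring

lemma abs_norm_sum_smul_sq_sub_le {ι : Type*} [Fintype ι] {v : ι → E} {w : ι → F} {η : ℝ}
    (h : ∀ i j, |⟪v i, v j⟫ - ⟪w i, w j⟫| ≤ η) (μ : ι → ℝ) :
    |‖∑ i, μ i • v i‖ ^ 2 - ‖∑ i, μ i • w i‖ ^ 2| ≤ η * (∑ i, |μ i|) ^ 2 := by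
  rw [norm_sum_smul_sq, norm_sum_smul_sq, ← sum_sub_distrib, sq, sum_mul_sum, mul_sum]
  refine (abs_sum_le_sum_abs _ _).trans (sum_le_sum fun i _ => ?_)
  rw [← sum_sub_distrib, mul_sum]
  refine (abs_sum_le_sum_abs _ _).trans (sum_le_sum fun j _ => ?_)
  rw [← mul_sub, abs_mul, abs_mul]
  rw [mul_comm η]
  exact mul_le_mul_of_nonneg_left (h i j) (by positivity)

lemma Submodule.exists_norm_eq_one_forall_inner_eq_zero {ι : Type*} [Fintype ι]
    (P : Submodule ℝ E) (v : ι → E) (h : Fintype.card ι < finrank ℝ P) :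
    ∃ e ∈ P, ‖e‖ = 1 ∧ ∀ i, ⟪e, v i⟫ = 0 := by
  have : FiniteDimensional ℝ P := Module.finite_of_finrank_pos (by omega)
  let L : P →ₗ[ℝ] ι → ℝ := LinearMap.pi fun i => (innerₛₗ ℝ (v i)).comp P.subtype
  obtain ⟨y, hyL, hy⟩ := (Submodule.ne_bot_iff _).mp <| LinearMap.ker_ne_bot_of_finrank_lt
    (f := L) (by rwa [Module.finrank_fintype_fun_eq_card])
  have hy' : (y : E) ≠ 0 := by simpa using hy
  refine ⟨‖(y : E)‖⁻¹ • (y : E), P.smul_mem _ y.2, norm_smul_inv_norm hy', fun i => ?_⟩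
  rw [real_inner_smul_left, real_inner_comm]
  exact mul_eq_zero_of_right _ (congr_fun hyL i)

def IsWellConditioned {ι : Type*} [Fintype ι] (K : ℝ) (v : ι → E) : Prop :=
  ∀ μ : ι → ℝ, ∑ i, |μ i| ≤ K * ‖∑ i, μ i • v i‖

lemma IsWellConditioned.linearIndependent {ι : Type*} [Fintype ι] {K : ℝ} {v : ι → E}
    (hv : IsWellConditioned K v) : LinearIndependent ℝ v := by
  refine Fintype.linearIndependent_iff.mpr fun μ hμ i => abs_eq_zero.mp ?_
  have := hv μ
  rw [hμ, norm_zero, mul_zero] at this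
  exact le_antisymm ((single_le_sum (fun j _ => abs_nonneg (μ j)) (mem_univ i)).trans this)
    (abs_nonneg _)

/-- The new coefficient is read off from `⟪e, ·⟫`, which kills the old vectors. -/
lemma IsWellConditioned.snoc {m : ℕ} {K r : ℝ} {v : Fin m → E} (hv : IsWellConditioned K v)
    (hK : 0 ≤ K) (hr : 0 < r) {e w : E} (he : ‖e‖ ≤ 1) (hev : ∀ i, ⟪e, v i⟫ = 0)
    (hw : ‖w‖ ≤ r) (hew : r / 2 ≤ ⟪e, w⟫) :
    IsWellConditioned (3 * K + 2 / r) (Fin.snoc v w : Fin (m + 1) → E) := by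
  intro μ
  simp only [Fin.sum_univ_castSucc, Fin.snoc_castSucc, Fin.snoc_last]
  set s := ∑ i : Fin m, μ i.castSucc • v i
  set t := μ (Fin.last m)
  have hes : ⟪e, s⟫ = 0 := by simp [s, inner_sum, real_inner_smul_right, hev]
  have ht : |t| * (r / 2) ≤ ‖s + t • w‖ := calc
    |t| * (r / 2) ≤ |t| * ⟪e, w⟫ := mul_le_mul_of_nonneg_left hew (abs_nonneg t)
    _ = |⟪e, s + t • w⟫| := by
      rw [inner_add_right, hes, zero_add, real_inner_smul_right, abs_mul,
        abs_of_nonneg ((half_pos hr).le.trans hew)]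
    _ ≤ ‖e‖ * ‖s + t • w‖ := abs_real_inner_le_norm _ _
    _ ≤ ‖s + t • w‖ := mul_le_of_le_one_left (norm_nonneg _) he
  have hs : ‖s‖ ≤ 3 * ‖s + t • w‖ := calc
    ‖s‖ ≤ ‖s + t • w‖ + ‖t • w‖ := norm_le_add_norm_add s (t • w)
    _ ≤ ‖s + t • w‖ + |t| * r := by
      rw [norm_smul, Real.norm_eq_abs]; gcongr
    _ ≤ 3 * ‖s + t • w‖ := by linarith
  have ht' : |t| ≤ 2 / r * ‖s + t • w‖ := by
    rw [div_mul_eq_mul_div, le_div_iff₀ hr]; linarith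
  linarith [hv fun i => μ i.castSucc, mul_le_mul_of_nonneg_left hs hK]

/-- Greedily pick a unit `e ∈ P` orthogonal to the vectors chosen so far and a point of `A`
near `x + (3r/4) e`. -/
lemma exists_isWellConditioned_of_forall_exists_dist_lt {A : Set E} {x : E} {r : ℝ}
    (hr : 0 < r) {P : Submodule ℝ E}
    (hA : ∀ e ∈ P, ‖e‖ < r → ∃ q ∈ A, dist (e + x) q < r / 4) :
    ∀ m ≤ finrank ℝ P, ∃ v : Fin m → E, (∀ i, v i + x ∈ A) ∧
      IsWellConditioned ((3 ^ m - 1) / r) v := by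
  intro m
  induction m with
  | zero => exact fun _ => ⟨finZeroElim, finZeroElim, fun μ => by simp⟩
  | succ m ih =>
    intro hm
    obtain ⟨v, hvA, hv⟩ := ih (by omega)
    obtain ⟨e, heP, he, hev⟩ :=
      P.exists_norm_eq_one_forall_inner_eq_zero v (by rwa [Fintype.card_fin])
    obtain ⟨q, hqA, hq⟩ := hA ((3 * r / 4) • e) (P.smul_mem _ heP) (by
      rw [norm_smul, he, mul_one, Real.norm_of_nonneg (by positivity)]; linarith)
    rw [dist_eq_norm'] at hq
    have hqx : q - x = (3 * r / 4) • e + (q - ((3 * r / 4) • e + x)) := by abel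
    have hw : ‖q - x‖ ≤ r := by
      rw [hqx]
      refine (norm_add_le _ _).trans ?_
      rw [norm_smul, he, mul_one, Real.norm_of_nonneg (by positivity)]
      linarith
    have hew : r / 2 ≤ ⟪e, q - x⟫ := by
      rw [hqx, inner_add_right, real_inner_smul_right, real_inner_self_eq_norm_sq, he]
      have := neg_abs_le ⟪e, q - ((3 * r / 4) • e + x)⟫
      have := (abs_real_inner_le_norm e (q - ((3 * r / 4) • e + x))).trans_lt
        (by rwa [he, one_mul])
      linarith
    refine ⟨Fin.snoc v (q - x), fun i => ?_, ?_⟩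
    · induction i using Fin.lastCases with
      | last => simpa using hqA
      | cast i => simpa using hvA i
    · convert hv.snoc (div_nonneg (sub_nonneg.mpr (one_le_pow₀ (by norm_num))) hr.le) hr
        he.le hev hw hew using 1
      field_simp
      ring

/-- Write `g y` in the basis `g (p i)` and compare the Gram matrices of the family
`y, p 0, …, p (n - 1)` before and after `g`. -/
lemma exists_norm_sub_sum_smul_sq_le [FiniteDimensional ℝ F] {A : Set E} {x : E} {g : A → F}
    {η K : ℝ} (hg : ∀ a b : A, |⟪(a : E) - x, (b : E) - x⟫ - ⟪g a, g b⟫| ≤ η)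
    {n : ℕ} (hF : finrank ℝ F ≤ n) {p : Fin n → A}
    (hp : IsWellConditioned K fun i => (p i : E) - x) (hK : 0 ≤ K) (hηK : η * K ^ 2 ≤ 1 / 2)
    (y : A) : ∃ μ : Fin n → ℝ,
      ‖((y : E) - x) - ∑ i, μ i • ((p i : E) - x)‖ ^ 2 ≤ η * (1 + 2 * K * ‖g y‖) ^ 2 := by
  set v : Fin n → E := fun i => (p i : E) - x
  have hη : 0 ≤ η := (abs_nonneg _).trans (hg y y)
  have hnorm_le : ∀ μ : Fin n → ℝ, ‖∑ i, μ i • v i‖ ^ 2 ≤ 2 * ‖∑ i, μ i • g (p i)‖ ^ 2 := by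
    intro μ
    have hgram := (abs_le.mp (abs_norm_sum_smul_sq_sub_le (fun i j => hg (p i) (p j)) μ)).2
    have hμ : (∑ i, |μ i|) ^ 2 ≤ (K * ‖∑ i, μ i • v i‖) ^ 2 :=
      pow_le_pow_left₀ (sum_nonneg fun i _ => abs_nonneg _) (hp μ) 2
    nlinarith
  have hind : LinearIndependent ℝ fun i => g (p i) := by
    refine Fintype.linearIndependent_iff.mpr fun μ hμ =>
      Fintype.linearIndependent_iff.mp hp.linearIndependent μ ?_
    have := hnorm_le μ
    rw [hμ, norm_zero] at this
    exact norm_eq_zero.mp (by nlinarith [norm_nonneg (∑ i, μ i • v i)])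
  have hspan := hind.span_eq_top_of_card_eq_finrank'
    (le_antisymm hind.fintype_card_le_finrank (by rwa [Fintype.card_fin]))
  obtain ⟨μ, hμ⟩ := (Submodule.mem_span_range_iff_exists_fun ℝ).mp (hspan ▸ Submodule.mem_top :
    g y ∈ Submodule.span ℝ (range fun i => g (p i)))
  have hμK : ∑ i, |μ i| ≤ 2 * K * ‖g y‖ := by
    have := hnorm_le μ
    rw [hμ] at this
    have : ‖∑ i, μ i • v i‖ ≤ 2 * ‖g y‖ := by
      nlinarith [norm_nonneg (∑ i, μ i • v i), norm_nonneg (g y)]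
    nlinarith [hp μ]
  refine ⟨μ, ?_⟩
  have hgram := abs_le.mp <| abs_norm_sum_smul_sq_sub_le
    (v := fun i => ((Fin.cons y p : Fin (n + 1) → A) i : E) - x)
    (w := fun i => g ((Fin.cons y p : Fin (n + 1) → A) i)) (fun i j => hg _ _)
    (Fin.cons 1 (-μ))
  simp only [Fin.sum_univ_succ, Fin.cons_zero, Fin.cons_succ, one_smul, Pi.neg_apply, neg_smul,
    sum_neg_distrib, hμ, add_neg_cancel, norm_zero, abs_one, abs_neg] at hgram
  calc ‖((y : E) - x) - ∑ i, μ i • v i‖ ^ 2 ≤ η * (1 + ∑ i, |μ i|) ^ 2 := by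
        rw [← sub_eq_add_neg] at hgram; linarith [hgram.2]
    _ ≤ η * (1 + 2 * K * ‖g y‖) ^ 2 := by
        gcongr

lemma exists_affineSubspace_forall_infDist_le [FiniteDimensional ℝ F] {A : Set E} {x : E}
    {r δ K : ℝ} (hxA : x ∈ A) (hA : A ⊆ ball x r) {n : ℕ} (hF : finrank ℝ F ≤ n)
    (f : A → ball (0 : F) r) (hf : ∀ a b, |dist (f a) (f b) - dist a b| < δ)
    {p : Fin n → A} (hp : IsWellConditioned K fun i => (p i : E) - x) (hK : 0 ≤ K)
    (hδ : 6 * δ * r * K ^ 2 ≤ 1 / 2) :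
    ∃ Γ : AffineSubspace ℝ E, x ∈ Γ ∧ finrank ℝ Γ.direction = n ∧
      ∀ y ∈ A, infDist y Γ ≤ (1 + 4 * r * K) * √(6 * δ * r) := by
  let x' : A := ⟨x, hxA⟩
  set g : A → F := fun a => (f a : F) - f x'
  have hball (a b : A) : ‖(a : E) - b‖ ≤ 2 * r := norm_sub_le_two_mul_of_mem_ball (hA a.2) (hA b.2)
  have hball' (a b : A) : ‖(f a : F) - f b‖ ≤ 2 * r :=
    norm_sub_le_two_mul_of_mem_ball (f a).2 (f b).2
  have hdist (a b : A) : |‖(a : E) - b‖ - ‖(f a : F) - f b‖| ≤ δ := by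
    rw [abs_sub_comm, ← dist_eq_norm, ← dist_eq_norm]
    exact (hf a b).le
  have hg (a b : A) : |⟪(a : E) - x, (b : E) - x⟫ - ⟪g a, g b⟫| ≤ 6 * δ * r :=
    abs_inner_sub_inner_le_of_abs_norm_sub_le (hball a b) (hball a x') (hball b x') (hball' a b)
      (hball' a x') (hball' b x') (hdist a b) (hdist a x') (hdist b x')
  refine ⟨AffineSubspace.mk' x (Submodule.span ℝ (range fun i => (p i : E) - x)),
    AffineSubspace.self_mem_mk' _ _, ?_, fun y hy => ?_⟩
  · rw [AffineSubspace.direction_mk', finrank_span_eq_card hp.linearIndependent,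
      Fintype.card_fin]
  obtain ⟨μ, hμ⟩ := exists_norm_sub_sum_smul_sq_le hg hF hp hK (by linarith) ⟨y, hy⟩
  have hc : 0 ≤ 1 + 2 * K * ‖g ⟨y, hy⟩‖ := by positivity
  calc infDist y _ ≤ dist y ((∑ i, μ i • ((p i : E) - x)) +ᵥ x) :=
        infDist_le_dist_of_mem <| AffineSubspace.vadd_mem_mk' _ <|
          Submodule.sum_mem _ fun i _ =>
            Submodule.smul_mem _ _ (Submodule.subset_span (mem_range_self i))
    _ = ‖(y - x) - ∑ i, μ i • ((p i : E) - x)‖ := by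
        rw [dist_eq_norm, vadd_eq_add, sub_add_eq_sub_sub_swap]
    _ ≤ (1 + 2 * K * ‖g ⟨y, hy⟩‖) * √(6 * δ * r) := by
        rw [mul_comm, ← Real.sqrt_sq hc, ← Real.sqrt_mul' _ (sq_nonneg _)]
        exact Real.le_sqrt_of_sq_le hμ
    _ ≤ (1 + 4 * r * K) * √(6 * δ * r) :=
        mul_le_mul_of_nonneg_right (by nlinarith [hball' ⟨y, hy⟩ x']) (Real.sqrt_nonneg _)

end InnerProductSpace

section

variable {n d : ℕ} {S : Set (EuclideanSpace ℝ (Fin d))} {x : EuclideanSpace ℝ (Fin d)} {r : ℝ}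
  {Γ : AffineSubspace ℝ (EuclideanSpace ℝ (Fin d))}

lemma planeSup_nonneg (hr : 0 ≤ r) : 0 ≤ planeSup S Γ x r :=
  mul_nonneg (inv_nonneg.mpr hr) (Real.sSup_nonneg (by rintro _ ⟨y, -, rfl⟩; exact infDist_nonneg))

lemma planeSup_le_of_forall_infDist_le (hr : 0 ≤ r) {c : ℝ} (hc : 0 ≤ c)
    (h : ∀ y ∈ S ∩ ball x r, infDist y Γ ≤ c) : planeSup S Γ x r ≤ r⁻¹ * c :=
  mul_le_mul_of_nonneg_left (Real.sSup_le (by rintro _ ⟨y, hy, rfl⟩; exact h y hy) hc)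
    (inv_nonneg.mpr hr)

lemma planeSup_le_planeHD (hr : 0 < r) (hxS : x ∈ S) (hxΓ : x ∈ Γ) :
    planeSup S Γ x r ≤ planeHD S Γ x r :=
  planeSup_le_of_forall_infDist_le hr.le hausdorffDist_nonneg fun _ hy =>
    (infDist_le_infDist_of_subset inter_subset_left ⟨x, hxΓ, mem_ball_self hr⟩).trans
      (infDist_le_hausdorffDist_of_mem hy (hausdorffEDist_inter_ball_ne_top hr hxS hxΓ))

lemma betaNum_nonneg (hr : 0 ≤ r) : 0 ≤ betaNum n S x r :=
  Real.sInf_nonneg (by rintro _ ⟨Γ, -, -, rfl⟩; exact planeSup_nonneg hr)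

lemma betaNum_le_planeSup (hr : 0 ≤ r) (hxΓ : x ∈ Γ) (hΓ : finrank ℝ Γ.direction = n) :
    betaNum n S x r ≤ planeSup S Γ x r :=
  csInf_le ⟨0, by rintro _ ⟨Γ, -, -, rfl⟩; exact planeSup_nonneg hr⟩ ⟨Γ, hxΓ, hΓ, rfl⟩

lemma exists_planeHD_lt_of_alphaNum_lt {t : ℝ} (hnd : n ≤ d) (hα : alphaNum n S x r < t) :
    ∃ Γ : AffineSubspace ℝ (EuclideanSpace ℝ (Fin d)),
      x ∈ Γ ∧ finrank ℝ Γ.direction = n ∧ planeHD S Γ x r < t := by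
  obtain ⟨b, hb⟩ := exists_linearIndependent_of_le_finrank (R := ℝ)
    (hnd.trans_eq finrank_euclideanSpace_fin.symm)
  obtain ⟨_, ⟨Γ, hxΓ, hΓ, rfl⟩, hlt⟩ := exists_lt_of_csInf_lt
    (by exact ⟨_, AffineSubspace.mk' x (Submodule.span ℝ (range b)),
      AffineSubspace.self_mem_mk' _ _,
      by rw [AffineSubspace.direction_mk', finrank_span_eq_card hb, Fintype.card_fin], rfl⟩) hα
  exact ⟨Γ, hxΓ, hΓ, hlt⟩

lemma exists_isWellConditioned_of_planeHD_lt (hr : 0 < r) (hxS : x ∈ S) (hxΓ : x ∈ Γ)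
    (hΓ : finrank ℝ Γ.direction = n) (h : planeHD S Γ x r < 1 / 4) :
    ∃ v : Fin n → EuclideanSpace ℝ (Fin d), (∀ i, v i + x ∈ S ∩ ball x r) ∧
      IsWellConditioned ((3 ^ n - 1) / r) v := by
  have hHD : hausdorffDist (S ∩ ball x r) ((Γ : Set _) ∩ ball x r) < r / 4 := by
    rw [planeHD, inv_mul_lt_iff₀ hr] at h
    linarith
  refine exists_isWellConditioned_of_forall_exists_dist_lt hr (fun e he her => ?_) n hΓ.ge
  have hex : e + x ∈ (Γ : Set _) ∩ ball x r :=
    ⟨AffineSubspace.vadd_mem_of_mem_direction he hxΓ,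
      by rwa [mem_ball, dist_eq_norm, add_sub_cancel_right]⟩
  obtain ⟨q, hq, hdist⟩ := exists_dist_lt_of_hausdorffDist_lt' hex hHD
    (hausdorffEDist_inter_ball_ne_top hr hxS hxΓ)
  exact ⟨q, hq, by rwa [dist_comm]⟩

/-- The threshold `12 N² δ ≤ r` is what makes `η K² ≤ 1/2` for `η = 6 δ r`, `K = (N - 1) / r`;
above it, `β ≤ 1/8` already suffices. -/
lemma sq_betaNum_mul_le (hr : 0 < r) (hxS : x ∈ S) (hβ : betaNum n S x r ≤ 1 / 8)
    {v : Fin n → EuclideanSpace ℝ (Fin d)} (hvS : ∀ i, v i + x ∈ S ∩ ball x r)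
    (hv : IsWellConditioned ((3 ^ n - 1) / r) v) {δ : ℝ}
    (f : ↥(S ∩ ball x r) → ↥(ball (0 : EuclideanSpace ℝ (Fin n)) r))
    (hf : ∀ a b, |dist (f a) (f b) - dist a b| < δ) :
    betaNum n S x r ^ 2 * r ≤ (10 * 3 ^ n) ^ 2 * δ := by
  set N : ℝ := 3 ^ n
  have hN : 1 ≤ N := one_le_pow₀ (by norm_num)
  have hβ0 := betaNum_nonneg (n := n) (S := S) (x := x) hr.le
  rcases lt_or_ge r (12 * N ^ 2 * δ) with hlarge | hsmall
  · have hβ2 : betaNum n S x r ^ 2 ≤ 1 / 64 := by nlinarith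
    nlinarith [mul_le_mul_of_nonneg_right hβ2 hr.le]
  have hxA : x ∈ S ∩ ball x r := ⟨hxS, mem_ball_self hr⟩
  have hδ : 0 ≤ δ := by simpa using (hf ⟨x, hxA⟩ ⟨x, hxA⟩).le
  set K := (N - 1) / r
  have hrK : r * K = N - 1 := by simp only [K]; field_simp
  have hK : 0 ≤ K := div_nonneg (by linarith) hr.le
  have hδK : 6 * δ * r * K ^ 2 ≤ 1 / 2 := by
    have : 6 * δ * r * K ^ 2 * r = 6 * δ * (N - 1) ^ 2 := by rw [← hrK]; ring
    exact le_of_mul_le_mul_right (by nlinarith) hr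
  obtain ⟨Γ, hxΓ, hΓ, hdist⟩ := exists_affineSubspace_forall_infDist_le
    (p := fun i => ⟨v i + x, hvS i⟩) hxA inter_subset_right finrank_euclideanSpace_fin.le f hf
    (by simpa using hv) hK hδK
  set c := 1 + 4 * r * K
  have hβΓ := (betaNum_le_planeSup hr.le hxΓ hΓ).trans
    (planeSup_le_of_forall_infDist_le hr.le (by positivity) hdist)
  calc betaNum n S x r ^ 2 * r ≤ (r⁻¹ * (c * √(6 * δ * r))) ^ 2 * r := by gcongr
    _ = 6 * c ^ 2 * δ := by
      rw [mul_pow, mul_pow, Real.sq_sqrt (by positivity)]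
      field_simp
    _ ≤ (10 * N) ^ 2 * δ := by
      have hc : c ^ 2 ≤ 16 * N ^ 2 := by
        rw [show c = 1 + 4 * (r * K) by ring, hrK]
        nlinarith
      nlinarith [mul_le_mul_of_nonneg_right hc hδ]

lemma le_mul_sqrt_bTilde (hr : 0 < r) {β C : ℝ} (hC : 0 < C)
    (h : ∀ δ, ∀ f : ↥(S ∩ ball x r) → ↥(ball (0 : EuclideanSpace ℝ (Fin n)) r),
      (∀ a b, |dist (f a) (f b) - dist a b| < δ) → β ^ 2 * r ≤ C ^ 2 * δ) :
    β ≤ C * √(bTilde n S x r) := by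
  have hne : {δ : ℝ | 0 < δ ∧
      ∃ f : ↥(S ∩ ball x r) → ↥(ball (0 : EuclideanSpace ℝ (Fin n)) r),
        ∀ a b, |dist (f a) (f b) - dist a b| < δ}.Nonempty := by
    refine ⟨2 * r, by positivity, fun _ => ⟨0, mem_ball_self hr⟩, fun a b => ?_⟩
    rw [dist_self, zero_sub, abs_neg, abs_of_nonneg dist_nonneg, Subtype.dist_eq]
    linarith [dist_triangle_right (a : EuclideanSpace ℝ (Fin d)) b x, mem_ball.mp a.2.2,
      mem_ball.mp b.2.2]
  have hinf : β ^ 2 * r / C ^ 2 ≤ sInf _ := le_csInf hne fun δ ⟨_, f, hf⟩ => by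
    rw [div_le_iff₀ (by positivity)]
    linarith [h δ f hf]
  rw [← Real.sqrt_sq hC.le, ← Real.sqrt_mul (sq_nonneg C)]
  refine Real.le_sqrt_of_sq_le ?_
  calc β ^ 2 = C ^ 2 * (r⁻¹ * (β ^ 2 * r / C ^ 2)) := by field_simp
    _ ≤ C ^ 2 * bTilde n S x r := by unfold bTilde; gcongr

end

theorem stmt15 (n : ℕ) :
    ∃ C : ℝ, 0 < C ∧
      ∀ (d : ℕ) (S : Set (EuclideanSpace ℝ (Fin d)))
        (x : EuclideanSpace ℝ (Fin d)) (r : ℝ),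
        n < d → x ∈ S → 0 < r → alphaNum n S x r < 1 / 8 →
        betaNum n S x r ≤ 100 * C * Real.sqrt (bTilde n S x r) := by
  refine ⟨10 * 3 ^ n, by positivity, fun d S x r hnd hxS hr hα => ?_⟩
  obtain ⟨Γ, hxΓ, hΓ, hΓα⟩ := exists_planeHD_lt_of_alphaNum_lt hnd.le hα
  have hβ : betaNum n S x r ≤ 1 / 8 :=
    ((betaNum_le_planeSup hr.le hxΓ hΓ).trans (planeSup_le_planeHD hr hxS hxΓ)).trans hΓα.le
  obtain ⟨v, hvS, hv⟩ := exists_isWellConditioned_of_planeHD_lt hr hxS hxΓ hΓ (by linarith)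
  calc betaNum n S x r ≤ 10 * 3 ^ n * √(bTilde n S x r) :=
        le_mul_sqrt_bTilde hr (by positivity) fun _ f hf =>
          sq_betaNum_mul_le hr hxS hβ hvS hv f hf
    _ ≤ 100 * (10 * 3 ^ n) * √(bTilde n S x r) := by
        nlinarith [Real.sqrt_nonneg (bTilde n S x r), pow_pos (three_pos (α := ℝ)) n]
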